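/- For the bit transmission specification, the pair (π, π') of environment traces is in the time-bounded distinguishability relation Λ_b if and only if π 0 = true and π' 0 = false; in particular, Λ_b is not symmetric. -/
import Mathlib


/-- The bit transmission specification. -/
def phiB (π : ℕ → Bool) (o : ℕ → Bool) : Prop :=
  (π 0 = true ↔ ∃ k, o k = true)

/-- `(π', o)` finitely violates the bit transmission specification. -/
def FinViolates (π' : ℕ → Bool) (o : ℕ → Bool) : Prop :=
  ∃ n : ℕ, ∀ σ o' : ℕ → Bool,
    (∀ i < n, σ i = π' i ∧ o' i = o i) → ¬ phiB σ o'

/-- For bit transmission, Λ_b holds iff π starts true and π' starts false. -/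
theorem bit_transmission_timeBounded (π π' : ℕ → Bool) :
    (∀ o : ℕ → Bool, phiB π o → FinViolates π' o) ↔
      (π 0 = true ∧ π' 0 = false) := by
  constructor
  · intro h
    constructor
    · by_contra hπ
      have hπf : π 0 = false := by simpa using hπ
      have hphi : phiB π (fun _ => false) := by
        simp [phiB, hπf]
      obtain ⟨n, hn⟩ := h _ hphi
      by_cases hπ' : π' 0 = true
      · exact hn π' (fun k => decide (k = n)) (by intro i hi; simp [Nat.ne_of_lt hi])
          (by simp [phiB, hπ'])
      · have hπ'f : π' 0 = false := by simpa using hπ'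
        exact hn π' (fun _ => false) (by intro i hi; simp) (by simp [phiB, hπ'f])
    · by_contra hπ'
      have hπ't : π' 0 = true := by simpa using hπ'
      have hphi : phiB π (fun _ => true) := by
        constructor
        · intro _; exact ⟨0, rfl⟩
        · intro _
          by_contra hπ
          have hπf : π 0 = false := by simpa using hπ
          have hphi2 : phiB π (fun _ => false) := by simp [phiB, hπf]
          obtain ⟨n, hn⟩ := h _ hphi2
          by_cases hc : π' 0 = true
          · exact hn π' (fun k => decide (k = n)) (by intro i hi; simp [Nat.ne_of_lt hi])
              (by simp [phiB, hc])
          · have : π' 0 = false := by simpa using hc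
            exact hn π' (fun _ => false) (by intro i hi; simp) (by simp [phiB, this])
      obtain ⟨n, hn⟩ := h _ hphi
      exact hn π' (fun _ => true) (by intro i hi; simp)
        (by simp [phiB, hπ't])
  · rintro ⟨hπ, hπ'⟩ o ho
    obtain ⟨k, hk⟩ := ho.mp hπ
    refine ⟨k + 1, fun σ o' hag hphi => ?_⟩
    have hσ0 : σ 0 = false := (hag 0 (Nat.succ_pos k)).1.trans hπ'
    have ho'k : o' k = true := (hag k (Nat.lt_succ_self k)).2.trans hk
    have := hphi.mpr ⟨k, ho'k⟩
    simp [hσ0] at this
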